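/- For every natural number n, n! = Σ_{λ ⊢ n} (f^λ)², the sum over all partitions λ of n of the square of the number of standard Young tableaux of shape λ. -/

import Mathlib

open MvPolynomial
open scoped Classical

/-- `S n` : coefficients of `exp(∑ xᵢ tⁱ)`. -/
noncomputable def S : ℕ → MvPolynomial ℕ ℚ
  | 0 => 1
  | (n+1) => ((n+1 : ℚ))⁻¹ •
      ∑ i ∈ Finset.range (n+1), ((i+1 : ℚ)) • (X (i+1) * S (n - i))
  decreasing_by exact Nat.lt_succ_of_le (Nat.sub_le n i)

noncomputable def Sint (m : ℤ) : MvPolynomial ℕ ℚ :=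
  if 0 ≤ m then S m.toNat else 0

noncomputable def SchurPoly (μ : YoungDiagram) : MvPolynomial ℕ ℚ :=
  Matrix.det (Matrix.of fun i j : Fin (μ.colLen 0) =>
    Sint ((μ.rowLen j : ℤ) - (j : ℤ) + (i : ℤ)))

/-- number of standard Young tableaux of shape μ -/
noncomputable def fSYT (μ : YoungDiagram) : ℕ :=
  Set.ncard {T : {c // c ∈ μ.cells} ≃ Fin μ.card |
    ∀ c d : {c // c ∈ μ.cells}, (c : ℕ × ℕ).1 ≤ (d : ℕ × ℕ).1 →
      (c : ℕ × ℕ).2 ≤ (d : ℕ × ℕ).2 → c ≠ d → T c < T d}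

def toYD {n : ℕ} (p : n.Partition) : YoungDiagram :=
  YoungDiagram.ofRowLens (p.parts.sort (· ≥ ·)) (List.Pairwise.sortedGE (Multiset.pairwise_sort _ _))

noncomputable def einv (m : ℤ) : ℚ :=
  if 0 ≤ m then ((Nat.factorial m.toNat : ℚ))⁻¹ else 0

noncomputable def ExpDelta (μ : YoungDiagram) : ℚ :=
  Matrix.det (Matrix.of fun i j : Fin (μ.colLen 0) =>
    einv ((μ.rowLen j : ℤ) - (j : ℤ) + (i : ℤ)))

def hookLen (μ : YoungDiagram) (c : ℕ × ℕ) : ℕ :=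
  μ.rowLen c.1 - c.2 + (μ.colLen c.2 - c.1) - 1

noncomputable def hpoly (r m : ℕ) : MvPolynomial (Fin r) ℚ :=
  ∑ f ∈ Finset.univ.filter (fun f : Fin m → Fin r => ∀ i j, i ≤ j → f i ≤ f j),
    ∏ i, X (f i)

noncomputable def hpolyInt (r : ℕ) (m : ℤ) : MvPolynomial (Fin r) ℚ :=
  if 0 ≤ m then hpoly r m.toNat else 0

noncomputable def sPoly (r : ℕ) (μ : YoungDiagram) : MvPolynomial (Fin r) ℚ :=
  Matrix.det (Matrix.of fun i j : Fin r => hpolyInt r ((μ.rowLen j : ℤ) - (j : ℤ) + (i : ℤ)))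

noncomputable def Dop : ℕ → (MvPolynomial ℕ ℚ →ₗ[ℚ] MvPolynomial ℕ ℚ)
  | 0 => LinearMap.id
  | (n+1) => ((n+1 : ℚ))⁻¹ •
      ∑ i ∈ Finset.range (n+1), ((pderiv (i+1)).toLinearMap).comp (Dop (n - i))
  decreasing_by exact Nat.lt_succ_of_le (Nat.sub_le n i)

noncomputable def Xw (r : ℕ) (μ : YoungDiagram) : ExteriorAlgebra ℚ (Polynomial ℚ) :=
  (List.ofFn fun k : Fin r =>
    ExteriorAlgebra.ι ℚ (Polynomial.X ^ (r - 1 - (k : ℕ) + μ.rowLen k))).prod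


namespace YD
open Finset

def IsRem (μ : YoungDiagram) (c : ℕ × ℕ) : Prop :=
  c ∈ μ ∧ (c.1 + 1, c.2) ∉ μ ∧ (c.1, c.2 + 1) ∉ μ

def IsAdd (μ : YoungDiagram) (c : ℕ × ℕ) : Prop :=
  c ∉ μ ∧ ∀ x, x < c → x ∈ μ

variable {μ : YoungDiagram} {c d x : ℕ × ℕ}

lemma IsRem.eq_of_le (h : IsRem μ c) (hx : x ∈ μ) (hcx : c ≤ x) : x = c := by
  by_contra hne
  rcases Prod.le_def.mp hcx with ⟨h1, h2⟩
  have hor : c.1 < x.1 ∨ c.2 < x.2 := by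
    rcases h1.lt_or_eq with h | h
    · exact Or.inl h
    rcases h2.lt_or_eq with h' | h'
    · exact Or.inr h'
    · exact absurd (Prod.ext h.symm h'.symm) hne
  rcases hor with hl | hl
  · exact h.2.1 (μ.up_left_mem hl h2 (by simpa using hx))
  · exact h.2.2 (μ.up_left_mem h1 hl (by simpa using hx))

noncomputable def eraseD (μ : YoungDiagram) (c : ℕ × ℕ) : YoungDiagram :=
  if h : IsRem μ c then
    ⟨μ.cells.erase c, by
      intro b a hab hb
      simp only [coe_erase, Set.mem_diff, Set.mem_singleton_iff, Finset.mem_coe,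
        YoungDiagram.mem_cells] at hb ⊢
      refine ⟨μ.isLowerSet hab hb.1, fun hac => ?_⟩
      subst hac
      exact hb.2 (h.eq_of_le hb.1 hab)⟩
  else μ

noncomputable def addD (μ : YoungDiagram) (c : ℕ × ℕ) : YoungDiagram :=
  if h : IsAdd μ c then
    ⟨insert c μ.cells, by
      intro b a hab hb
      simp only [coe_insert, Set.mem_insert_iff, Finset.mem_coe, YoungDiagram.mem_cells] at hb ⊢
      rcases hb with rfl | hb
      · rcases eq_or_lt_of_le hab with rfl | hlt
        · exact Or.inl rfl
        · exact Or.inr (h.2 a hlt)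
      · exact Or.inr (μ.isLowerSet hab hb)⟩
  else μ

lemma eraseD_cells (h : IsRem μ c) : (eraseD μ c).cells = μ.cells.erase c := by
  rw [eraseD, dif_pos h]

lemma addD_cells (h : IsAdd μ c) : (addD μ c).cells = insert c μ.cells := by
  rw [addD, dif_pos h]

lemma mem_eraseD (h : IsRem μ c) : x ∈ eraseD μ c ↔ x ∈ μ ∧ x ≠ c := by
  rw [← YoungDiagram.mem_cells, eraseD_cells h, Finset.mem_erase, and_comm]
  simp

lemma mem_addD (h : IsAdd μ c) : x ∈ addD μ c ↔ x = c ∨ x ∈ μ := by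
  rw [← YoungDiagram.mem_cells, addD_cells h, Finset.mem_insert]
  simp

lemma card_eraseD (h : IsRem μ c) : (eraseD μ c).card + 1 = μ.card := by
  rw [YoungDiagram.card, eraseD_cells h, Finset.card_erase_add_one h.1]

lemma card_addD (h : IsAdd μ c) : (addD μ c).card = μ.card + 1 := by
  rw [YoungDiagram.card, addD_cells h, Finset.card_insert_of_notMem (by simpa using h.1)]

lemma isAdd_eraseD (h : IsRem μ c) : IsAdd (eraseD μ c) c := by
  constructor
  · rw [mem_eraseD h]; simp
  · intro x hx
    rw [mem_eraseD h]
    exact ⟨μ.isLowerSet hx.le h.1, hx.ne⟩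

lemma addD_eraseD (h : IsRem μ c) : addD (eraseD μ c) c = μ := by
  ext1
  rw [addD_cells (isAdd_eraseD h), eraseD_cells h, Finset.insert_erase h.1]

lemma isRem_addD (h : IsAdd μ c) : IsRem (addD μ c) c := by
  refine ⟨(mem_addD h).mpr (Or.inl rfl), fun hm => ?_, fun hm => ?_⟩ <;>
    rw [mem_addD h] at hm <;> rcases hm with he | hm
  · exact absurd (congrArg Prod.fst he) (by simp)
  · exact h.1 (μ.up_left_mem (Nat.le_succ _) le_rfl hm)
  · exact absurd (congrArg Prod.snd he) (by simp)
  · exact h.1 (μ.up_left_mem le_rfl (Nat.le_succ _) hm)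

lemma eraseD_addD (h : IsAdd μ c) : eraseD (addD μ c) c = μ := by
  ext1
  rw [eraseD_cells (isRem_addD h), addD_cells h, Finset.erase_insert (by simpa using h.1)]

end YD
namespace YD
open Finset

variable {μ : YoungDiagram} {c d x : ℕ × ℕ}

noncomputable def remF (μ : YoungDiagram) : Finset (ℕ × ℕ) :=
  μ.cells.filter fun c => (c.1 + 1, c.2) ∉ μ ∧ (c.1, c.2 + 1) ∉ μ

lemma mem_remF : c ∈ remF μ ↔ IsRem μ c := by
  simp [remF, IsRem, and_assoc]

noncomputable def addF (μ : YoungDiagram) : Finset (ℕ × ℕ) :=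
  ((Finset.range (μ.colLen 0 + 1)) ×ˢ Finset.range (μ.rowLen 0 + 1)).filter (IsAdd μ)

lemma lt_of_fst_lt {a b : ℕ × ℕ} (h1 : a.1 < b.1) (h2 : a.2 ≤ b.2) : a < b :=
  lt_of_le_of_ne ⟨h1.le, h2⟩ (fun he => absurd (congrArg Prod.fst he) h1.ne)

lemma lt_of_snd_lt {a b : ℕ × ℕ} (h1 : a.1 ≤ b.1) (h2 : a.2 < b.2) : a < b :=
  lt_of_le_of_ne ⟨h1, h2.le⟩ (fun he => absurd (congrArg Prod.snd he) h2.ne)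

lemma mem_addF : c ∈ addF μ ↔ IsAdd μ c := by
  rw [addF, Finset.mem_filter, and_iff_right_iff_imp]
  intro h
  rw [Finset.mem_product, Finset.mem_range, Finset.mem_range, Nat.lt_succ_iff, Nat.lt_succ_iff]
  constructor
  · rcases Nat.eq_zero_or_eq_succ_pred c.1 with h0 | h1
    · simp [h0]
    · have hmem : (c.1 - 1, c.2) ∈ μ := h.2 _ (lt_of_fst_lt (by omega) le_rfl)
      have := YoungDiagram.mem_iff_lt_colLen.mp hmem
      have h2 := μ.colLen_anti 0 c.2 (Nat.zero_le _)
      omega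
  · rcases Nat.eq_zero_or_eq_succ_pred c.2 with h0 | h1
    · simp [h0]
    · have hmem : (c.1, c.2 - 1) ∈ μ := h.2 _ (lt_of_snd_lt le_rfl (by omega))
      have := YoungDiagram.mem_iff_lt_rowLen.mp hmem
      have h2 := μ.rowLen_anti 0 c.1 (Nat.zero_le _)
      omega

/-- forward swap -/
lemma swap_fwd (hc : IsAdd μ c) (hd : IsRem (addD μ c) d) (hne : d ≠ c) :
    IsRem μ d ∧ IsAdd (eraseD μ d) c := by
  have hdμ : d ∈ μ := by
    rcases (mem_addD hc).mp hd.1 with h | h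
    · exact absurd h hne
    · exact h
  have hdr : IsRem μ d :=
    ⟨hdμ, fun hm => hd.2.1 ((mem_addD hc).mpr (Or.inr hm)),
      fun hm => hd.2.2 ((mem_addD hc).mpr (Or.inr hm))⟩
  refine ⟨hdr, ?_, ?_⟩
  · rw [mem_eraseD hdr]
    rintro ⟨hcm, -⟩; exact hc.1 hcm
  · intro y hy
    rw [mem_eraseD hdr]
    refine ⟨hc.2 y hy, fun hyd => ?_⟩
    rw [hyd] at hy
    -- y = d < c, derive contradiction with removability of d in addD μ c
    have h1 : d.1 ≤ c.1 := hy.le.1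
    have h2 : d.2 ≤ c.2 := hy.le.2
    have hor : d.1 < c.1 ∨ d.2 < c.2 := by
      by_contra hcon
      push_neg at hcon
      exact hy.ne (Prod.ext (le_antisymm h1 hcon.1) (le_antisymm h2 hcon.2))
    rcases hor with hl | hl
    · have hle : (d.1 + 1, d.2) ≤ c := ⟨by omega, h2⟩
      rcases eq_or_lt_of_le hle with he | hlt
      · exact hd.2.1 ((mem_addD hc).mpr (Or.inl he))
      · exact hd.2.1 ((mem_addD hc).mpr (Or.inr (hc.2 _ hlt)))
    · have hle : (d.1, d.2 + 1) ≤ c := ⟨h1, by omega⟩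
      rcases eq_or_lt_of_le hle with he | hlt
      · exact hd.2.2 ((mem_addD hc).mpr (Or.inl he))
      · exact hd.2.2 ((mem_addD hc).mpr (Or.inr (hc.2 _ hlt)))

/-- backward swap -/
lemma swap_bwd (hd : IsRem μ d) (hc : IsAdd (eraseD μ d) c) (hne : c ≠ d) :
    IsAdd μ c ∧ IsRem (addD μ c) d := by
  have hcμ : c ∉ μ := fun hm => hc.1 ((mem_eraseD hd).mpr ⟨hm, hne⟩)
  have hca : IsAdd μ c := ⟨hcμ, fun y hy => ((mem_eraseD hd).mp (hc.2 y hy)).1⟩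
  refine ⟨hca, (mem_addD hca).mpr (Or.inr hd.1), fun hm => ?_, fun hm => ?_⟩ <;>
    rw [mem_addD hca] at hm <;> rcases hm with he | hm
  · -- c = (d.1+1, d.2); then d < c but d ∉ eraseD μ d : contradiction with hc.2
    have : d < c := by rw [← he]; exact lt_of_fst_lt (by simp) le_rfl
    exact ((mem_eraseD hd).mp (hc.2 d this)).2 rfl
  · exact hd.2.1 hm
  · have : d < c := by rw [← he]; exact lt_of_snd_lt le_rfl (by simp)
    exact ((mem_eraseD hd).mp (hc.2 d this)).2 rfl
  · exact hd.2.2 hm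

lemma swap_eq (hd : IsRem μ d) (hc : IsAdd (eraseD μ d) c) (hne : c ≠ d) :
    addD (eraseD μ d) c = eraseD (addD μ c) d := by
  obtain ⟨hca, hdr⟩ := swap_bwd hd hc hne
  ext x
  rw [YoungDiagram.mem_cells, YoungDiagram.mem_cells,
    mem_addD hc, mem_eraseD hd, mem_eraseD hdr, mem_addD hca]
  constructor
  · rintro (rfl | ⟨hm, hne'⟩)
    · exact ⟨Or.inl rfl, hne⟩
    · exact ⟨Or.inr hm, hne'⟩
  · rintro ⟨(rfl | hm), hne'⟩
    · exact Or.inl rfl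
    · exact Or.inr ⟨hm, hne'⟩

/-- number of addable corners = number of removable corners + 1 -/
lemma card_addF : (addF μ).card = (remF μ).card + 1 := by
  have h0 : (0, μ.rowLen 0) ∈ addF μ := by
    rw [mem_addF]
    constructor
    · rw [YoungDiagram.mem_iff_lt_rowLen]; omega
    · intro y hy
      have h1 : y.1 = 0 := Nat.le_zero.mp hy.le.1
      have h2 : y.2 < μ.rowLen 0 := by
        rcases Nat.lt_or_ge y.2 (μ.rowLen 0) with h | h
        · exact h
        · exact absurd (Prod.ext h1 (le_antisymm hy.le.2 h)) hy.ne
      rw [show y = (y.1, y.2) from rfl, h1, YoungDiagram.mem_iff_lt_rowLen]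
      exact h2
  have key : (remF μ).card = ((addF μ).erase (0, μ.rowLen 0)).card := by
    refine Finset.card_bij' (fun d _ => (d.1 + 1, μ.rowLen (d.1 + 1)))
      (fun c _ => (c.1 - 1, μ.rowLen (c.1 - 1) - 1)) ?_ ?_ ?_ ?_
    · -- maps into
      intro d hd
      rw [mem_remF] at hd
      have hrow : μ.rowLen d.1 = d.2 + 1 := by
        have h1 := YoungDiagram.mem_iff_lt_rowLen.mp hd.1
        have h2 : ¬ (d.2 + 1 < μ.rowLen d.1) := fun h => hd.2.2 (YoungDiagram.mem_iff_lt_rowLen.mpr h)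
        omega
      have hlt : μ.rowLen (d.1 + 1) < μ.rowLen d.1 := by
        have h2 : ¬ (d.2 < μ.rowLen (d.1 + 1)) := fun h => hd.2.1 (YoungDiagram.mem_iff_lt_rowLen.mpr h)
        omega
      rw [Finset.mem_erase, mem_addF]
      refine ⟨by simp, ?_, ?_⟩
      · rw [YoungDiagram.mem_iff_lt_rowLen]; omega
      · intro y hy
        have hy1 : y.1 ≤ d.1 + 1 := hy.le.1
        have hy2 : y.2 ≤ μ.rowLen (d.1 + 1) := hy.le.2
        rw [show y = (y.1, y.2) from rfl, YoungDiagram.mem_iff_lt_rowLen]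
        rcases Nat.lt_or_ge y.2 (μ.rowLen y.1) with h | h
        · exact h
        have hy1' : y.1 = d.1 + 1 := by
          by_contra hne
          have : y.1 ≤ d.1 := by omega
          have := μ.rowLen_anti y.1 d.1 this
          omega
        rw [hy1'] at h ⊢
        exact absurd (Prod.ext hy1' (by omega)) hy.ne
    · -- reverse maps into
      intro cc hcc
      rw [Finset.mem_erase, mem_addF] at hcc
      obtain ⟨hne0, hca⟩ := hcc
      -- c.2 = rowLen c.1
      have hc2 : cc.2 = μ.rowLen cc.1 := by
        have h1 : ¬ (cc.2 < μ.rowLen cc.1) := fun h => hca.1 (by rw [show cc = (cc.1, cc.2) from rfl, YoungDiagram.mem_iff_lt_rowLen]; exact h)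
        rcases Nat.eq_zero_or_pos cc.2 with h0 | hpos
        · omega
        · have : (cc.1, cc.2 - 1) ∈ μ := hca.2 _ (lt_of_snd_lt le_rfl (by omega))
          have := YoungDiagram.mem_iff_lt_rowLen.mp this
          omega
      have hc1 : 0 < cc.1 := by
        rcases Nat.eq_zero_or_pos cc.1 with h0 | h
        · exact absurd (Prod.ext h0 (by rw [hc2, h0])) hne0
        · exact h
      have hup : (cc.1 - 1, cc.2) ∈ μ := hca.2 _ (lt_of_fst_lt (by omega) le_rfl)
      have hupr := YoungDiagram.mem_iff_lt_rowLen.mp hup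
      rw [mem_remF]
      have hr1 : 0 < μ.rowLen (cc.1 - 1) := by omega
      refine ⟨YoungDiagram.mem_iff_lt_rowLen.mpr (by omega), ?_, ?_⟩
      · rw [YoungDiagram.mem_iff_lt_rowLen]
        simp only
        have : cc.1 - 1 + 1 = cc.1 := by omega
        rw [this]
        omega
      · rw [YoungDiagram.mem_iff_lt_rowLen]
        simp only
        omega
    · -- left inverse
      intro d hd
      rw [mem_remF] at hd
      have hrow : μ.rowLen d.1 = d.2 + 1 := by
        have h1 := YoungDiagram.mem_iff_lt_rowLen.mp hd.1
        have h2 : ¬ (d.2 + 1 < μ.rowLen d.1) := fun h => hd.2.2 (YoungDiagram.mem_iff_lt_rowLen.mpr h)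
        omega
      dsimp only
      rw [Nat.add_sub_cancel, hrow]
      exact Prod.ext rfl (by simp)
    · -- right inverse
      intro cc hcc
      rw [Finset.mem_erase, mem_addF] at hcc
      obtain ⟨hne0, hca⟩ := hcc
      have hc2 : cc.2 = μ.rowLen cc.1 := by
        have h1 : ¬ (cc.2 < μ.rowLen cc.1) := fun h => hca.1 (by rw [show cc = (cc.1, cc.2) from rfl, YoungDiagram.mem_iff_lt_rowLen]; exact h)
        rcases Nat.eq_zero_or_pos cc.2 with h0 | hpos
        · omega
        · have : (cc.1, cc.2 - 1) ∈ μ := hca.2 _ (lt_of_snd_lt le_rfl (by omega))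
          have := YoungDiagram.mem_iff_lt_rowLen.mp this
          omega
      have hc1 : 0 < cc.1 := by
        rcases Nat.eq_zero_or_pos cc.1 with h0 | h
        · exact absurd (Prod.ext h0 (by rw [hc2, h0])) hne0
        · exact h
      have h11 : cc.1 - 1 + 1 = cc.1 := by omega
      dsimp only
      rw [h11]
      exact Prod.ext rfl hc2.symm
  rw [key, Finset.card_erase_of_mem h0]
  have hpos : 0 < (addF μ).card := Finset.card_pos.mpr ⟨_, h0⟩
  omega

end YD
namespace YD
open Finset

variable {μ : YoungDiagram} {c d x : ℕ × ℕ}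

noncomputable def g (μ : YoungDiagram) : ℕ :=
  if h : μ.card = 0 then 1
  else ∑ c ∈ (remF μ).attach, g (eraseD μ c.1)
termination_by μ.card
decreasing_by
  have := card_eraseD (mem_remF.mp c.2); omega

lemma g_zero (h : μ.card = 0) : g μ = 1 := by rw [g, dif_pos h]

lemma g_rec (h : μ.card ≠ 0) : g μ = ∑ c ∈ remF μ, g (eraseD μ c) := by
  rw [g, dif_neg h]
  exact Finset.sum_attach _ (fun c => g (eraseD μ c))

lemma eq_bot_of_card (h : μ.card = 0) : μ = ⊥ := by
  ext1; simpa using Finset.card_eq_zero.mp h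

lemma remF_empty (h : μ.card = 0) : remF μ = ∅ := by
  rw [Finset.eq_empty_iff_forall_notMem]
  intro c hc
  have := (mem_remF.mp hc).1
  rw [← YoungDiagram.mem_cells, Finset.card_eq_zero.mp h] at this
  exact absurd this (Finset.notMem_empty c)

lemma sum_addF_aux : ∀ N (μ : YoungDiagram), μ.card = N →
    ∑ c ∈ addF μ, g (addD μ c) = (μ.card + 1) * g μ := by
  intro N
  induction N using Nat.strong_induction_on with
  | _ N IH =>
  intro μ hN
  have hA : ∀ c ∈ addF μ, g (addD μ c) =
      g μ + ∑ d ∈ (remF (addD μ c)).erase c, g (eraseD (addD μ c) d) := by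
    intro c hc
    have hca := mem_addF.mp hc
    rw [g_rec (by rw [card_addD hca]; omega),
      ← Finset.sum_erase_add _ _ (mem_remF.mpr (isRem_addD hca)), eraseD_addD hca]
    ring
  have hB : ∀ d ∈ remF μ, ∑ c ∈ addF (eraseD μ d), g (addD (eraseD μ d) c)
      = μ.card * g (eraseD μ d) := by
    intro d hd
    have hdr := mem_remF.mp hd
    have hcard := card_eraseD hdr
    rw [IH (eraseD μ d).card (by omega) _ rfl, hcard]
  have hBsplit : ∀ d ∈ remF μ, ∑ c ∈ addF (eraseD μ d), g (addD (eraseD μ d) c) =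
      g μ + ∑ c ∈ (addF (eraseD μ d)).erase d, g (addD (eraseD μ d) c) := by
    intro d hd
    have hdr := mem_remF.mp hd
    rw [← Finset.sum_erase_add _ _ (mem_addF.mpr (isAdd_eraseD hdr)), addD_eraseD hdr]
    ring
  have hswap : ∑ c ∈ addF μ, ∑ d ∈ (remF (addD μ c)).erase c, g (eraseD (addD μ c) d)
      = ∑ d ∈ remF μ, ∑ c ∈ (addF (eraseD μ d)).erase d, g (addD (eraseD μ d) c) := by
    rw [Finset.sum_sigma' (addF μ) _ (fun c d => g (eraseD (addD μ c) d)),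
      Finset.sum_sigma' (remF μ) _ (fun d c => g (addD (eraseD μ d) c))]
    refine Finset.sum_bij' (fun a _ => ⟨a.2, a.1⟩) (fun a _ => ⟨a.2, a.1⟩) ?_ ?_ ?_ ?_ ?_
    · rintro ⟨c, d⟩ ha
      rw [Finset.mem_sigma, Finset.mem_erase, mem_remF, mem_addF] at ha
      obtain ⟨hc, hdne, hdr⟩ := ha
      obtain ⟨h1, h2⟩ := swap_fwd hc hdr hdne
      rw [Finset.mem_sigma, Finset.mem_erase, mem_remF, mem_addF]
      exact ⟨h1, fun hcd => (hdne hcd.symm).elim, h2⟩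
    · rintro ⟨d, c⟩ ha
      rw [Finset.mem_sigma, Finset.mem_erase, mem_remF, mem_addF] at ha
      obtain ⟨hd, hcne, hca⟩ := ha
      obtain ⟨h1, h2⟩ := swap_bwd hd hca hcne
      rw [Finset.mem_sigma, Finset.mem_erase, mem_remF, mem_addF]
      exact ⟨h1, fun hdc => (hcne hdc.symm).elim, h2⟩
    · rintro ⟨c, d⟩ _; rfl
    · rintro ⟨d, c⟩ _; rfl
    · rintro ⟨c, d⟩ ha
      rw [Finset.mem_sigma, Finset.mem_erase, mem_remF, mem_addF] at ha
      obtain ⟨hc, hdne, hdr⟩ := ha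
      obtain ⟨h1, h2⟩ := swap_fwd hc hdr hdne
      dsimp only
      rw [swap_eq h1 h2 (Ne.symm hdne)]
  have hBtotal : ∑ d ∈ remF μ, ∑ c ∈ addF (eraseD μ d), g (addD (eraseD μ d) c)
      = μ.card * g μ := by
    rcases Nat.eq_zero_or_pos μ.card with h0 | hpos
    · rw [remF_empty h0, Finset.sum_empty, h0, Nat.zero_mul]
    · rw [Finset.sum_congr rfl hB, ← Finset.mul_sum, ← g_rec (by omega)]
  have key : (remF μ).card * g μ +
      (∑ d ∈ remF μ, ∑ c ∈ (addF (eraseD μ d)).erase d, g (addD (eraseD μ d) c))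
      = μ.card * g μ := by
    rw [← hBtotal, Finset.sum_congr rfl hBsplit, Finset.sum_add_distrib,
      Finset.sum_const, smul_eq_mul]
  calc ∑ c ∈ addF μ, g (addD μ c)
      = ∑ c ∈ addF μ, (g μ + ∑ d ∈ (remF (addD μ c)).erase c, g (eraseD (addD μ c) d)) :=
        Finset.sum_congr rfl hA
    _ = (addF μ).card * g μ +
        ∑ c ∈ addF μ, ∑ d ∈ (remF (addD μ c)).erase c, g (eraseD (addD μ c) d) := by
        rw [Finset.sum_add_distrib, Finset.sum_const, smul_eq_mul]
    _ = ((remF μ).card + 1) * g μ +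
        ∑ d ∈ remF μ, ∑ c ∈ (addF (eraseD μ d)).erase d, g (addD (eraseD μ d) c) := by
        rw [card_addF, hswap]
    _ = ((remF μ).card * g μ +
        ∑ d ∈ remF μ, ∑ c ∈ (addF (eraseD μ d)).erase d, g (addD (eraseD μ d) c)) + g μ := by
        ring
    _ = μ.card * g μ + g μ := by rw [key]
    _ = (μ.card + 1) * g μ := by ring

lemma sum_addF (μ : YoungDiagram) :
    ∑ c ∈ addF μ, g (addD μ c) = (μ.card + 1) * g μ :=
  sum_addF_aux μ.card μ rfl

end YD
namespace YD
open Finset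

variable {μ : YoungDiagram} {c : ℕ × ℕ}

def Pcond (μ : YoungDiagram) (T : {x // x ∈ μ.cells} ≃ Fin μ.card) : Prop :=
  ∀ a b : {x // x ∈ μ.cells}, (a : ℕ × ℕ).1 ≤ (b : ℕ × ℕ).1 →
    (a : ℕ × ℕ).2 ≤ (b : ℕ × ℕ).2 → a ≠ b → T a < T b

lemma fSYT_eq (μ : YoungDiagram) : fSYT μ = (Finset.univ.filter (Pcond μ)).card := by
  rw [fSYT, Set.ncard_eq_toFinset_card']
  congr 1
  ext T
  simp only [Set.mem_toFinset, Set.mem_setOf_eq, Finset.mem_filter, Finset.mem_univ, true_and]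
  rfl

lemma mem_eraseD_cells (hc : IsRem μ c) {x : ℕ × ℕ} (hx : x ∈ μ.cells) (hne : x ≠ c) :
    x ∈ (eraseD μ c).cells :=
  (mem_eraseD hc).mpr ⟨hx, hne⟩

lemma of_mem_eraseD_cells (hc : IsRem μ c) {x : ℕ × ℕ} (hx : x ∈ (eraseD μ c).cells) :
    x ∈ μ.cells ∧ x ≠ c :=
  (mem_eraseD hc).mp hx

lemma down_lt (hc : IsRem μ c) (T : {x // x ∈ μ.cells} ≃ Fin μ.card)
    (htop : (T ⟨c, hc.1⟩ : Fin μ.card).1 = (eraseD μ c).card)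
    (x : {x // x ∈ (eraseD μ c).cells}) :
    (T ⟨x.1, (of_mem_eraseD_cells hc x.2).1⟩ : Fin μ.card).1 < (eraseD μ c).card := by
  have hne : x.1 ≠ c := (of_mem_eraseD_cells hc x.2).2
  have h1 := (T ⟨x.1, (of_mem_eraseD_cells hc x.2).1⟩).2
  have hcard := card_eraseD hc
  rcases Nat.lt_or_ge (T ⟨x.1, (of_mem_eraseD_cells hc x.2).1⟩ : Fin μ.card).1
    ((eraseD μ c).card) with h | h
  · exact h
  · exfalso
    have heq : T ⟨x.1, (of_mem_eraseD_cells hc x.2).1⟩ = T ⟨c, hc.1⟩ :=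
      Fin.ext (by omega)
    exact hne (congrArg Subtype.val (T.injective heq))

lemma down_inv_mem (hc : IsRem μ c) (T : {x // x ∈ μ.cells} ≃ Fin μ.card)
    (htop : (T ⟨c, hc.1⟩ : Fin μ.card).1 = (eraseD μ c).card)
    (k : Fin (eraseD μ c).card) :
    ((T.symm ⟨k.1, by have := card_eraseD hc; omega⟩ : {x // x ∈ μ.cells}) : ℕ × ℕ)
      ∈ (eraseD μ c).cells := by
  have hcard := card_eraseD hc
  apply mem_eraseD_cells hc (T.symm _).2
  intro he
  have : (⟨k.1, by omega⟩ : Fin μ.card) = T ⟨c, hc.1⟩ := by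
    rw [← Equiv.apply_symm_apply T ⟨k.1, by omega⟩]
    congr 1
    exact Subtype.ext he
  have := congrArg Fin.val this
  simp only at this
  rw [htop] at this
  omega

noncomputable def downT (hc : IsRem μ c) (T : {x // x ∈ μ.cells} ≃ Fin μ.card)
    (htop : (T ⟨c, hc.1⟩ : Fin μ.card).1 = (eraseD μ c).card) :
    {x // x ∈ (eraseD μ c).cells} ≃ Fin (eraseD μ c).card where
  toFun x := ⟨_, down_lt hc T htop x⟩
  invFun k := ⟨_, down_inv_mem hc T htop k⟩
  left_inv x := by
    apply Subtype.ext
    simp only [Fin.eta, Equiv.symm_apply_apply]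
  right_inv k := by
    apply Fin.ext
    simp only [Subtype.coe_eta, Equiv.apply_symm_apply]

lemma up_lt (hc : IsRem μ c) (T' : {x // x ∈ (eraseD μ c).cells} ≃ Fin (eraseD μ c).card)
    (x : {x // x ∈ μ.cells}) (hx : x.1 ≠ c) :
    ((T' ⟨x.1, mem_eraseD_cells hc x.2 hx⟩ : Fin (eraseD μ c).card)).1 < μ.card := by
  have hcard := card_eraseD hc
  have := (T' ⟨x.1, mem_eraseD_cells hc x.2 hx⟩).2
  omega

noncomputable def upT (hc : IsRem μ c)
    (T' : {x // x ∈ (eraseD μ c).cells} ≃ Fin (eraseD μ c).card) :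
    {x // x ∈ μ.cells} ≃ Fin μ.card where
  toFun x :=
    if hx : x.1 = c then ⟨(eraseD μ c).card, by have := card_eraseD hc; omega⟩
    else ⟨_, up_lt hc T' x hx⟩
  invFun k :=
    if hk : k.1 = (eraseD μ c).card then ⟨c, hc.1⟩
    else ⟨(T'.symm ⟨k.1, by have := card_eraseD hc; have := k.2; omega⟩ : _).1,
      (of_mem_eraseD_cells hc (T'.symm _).2).1⟩
  left_inv x := by
    dsimp only
    by_cases hx : x.1 = c
    · rw [dif_pos hx, dif_pos rfl]
      exact Subtype.ext hx.symm
    · rw [dif_neg hx, dif_neg (by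
        simp only
        exact Nat.ne_of_lt ((T' ⟨x.1, mem_eraseD_cells hc x.2 hx⟩).2))]
      apply Subtype.ext
      simp only [Fin.eta, Equiv.symm_apply_apply]
  right_inv k := by
    dsimp only
    by_cases hk : k.1 = (eraseD μ c).card
    · rw [dif_pos hk, dif_pos rfl]
      exact Fin.ext hk.symm
    · rw [dif_neg hk, dif_neg (of_mem_eraseD_cells hc
        (T'.symm ⟨k.1, by have := card_eraseD hc; have := k.2; omega⟩).2).2]
      apply Fin.ext
      simp only [Subtype.coe_eta, Equiv.apply_symm_apply]

end YD
namespace YD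
open Finset

variable {μ : YoungDiagram} {c : ℕ × ℕ}

lemma Pcond_down (hc : IsRem μ c) (T : {x // x ∈ μ.cells} ≃ Fin μ.card)
    (htop : (T ⟨c, hc.1⟩ : Fin μ.card).1 = (eraseD μ c).card) (hP : Pcond μ T) :
    Pcond (eraseD μ c) (downT hc T htop) := by
  intro a b h1 h2 hne
  have hab : (⟨a.1, (of_mem_eraseD_cells hc a.2).1⟩ : {x // x ∈ μ.cells})
      ≠ ⟨b.1, (of_mem_eraseD_cells hc b.2).1⟩ := by
    intro he
    exact hne (Subtype.ext (Subtype.mk_eq_mk.mp he))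
  have := hP ⟨a.1, (of_mem_eraseD_cells hc a.2).1⟩ ⟨b.1, (of_mem_eraseD_cells hc b.2).1⟩ h1 h2 hab
  rw [Fin.lt_def] at this
  rw [Fin.lt_def]
  exact this

lemma Pcond_up (hc : IsRem μ c)
    (T' : {x // x ∈ (eraseD μ c).cells} ≃ Fin (eraseD μ c).card)
    (hP' : Pcond (eraseD μ c) T') : Pcond μ (upT hc T') := by
  intro a b h1 h2 hne
  rw [Fin.lt_def]
  unfold upT
  dsimp only [Equiv.coe_fn_mk]
  by_cases hb : b.1 = c
  · have ha : a.1 ≠ c := fun h => hne (Subtype.ext (h.trans hb.symm))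
    rw [dif_pos hb, dif_neg ha]
    exact (T' ⟨a.1, mem_eraseD_cells hc a.2 ha⟩).2
  · by_cases ha : a.1 = c
    · exfalso
      apply hb
      apply hc.eq_of_le b.2
      rw [← ha]
      exact ⟨h1, h2⟩
    · rw [dif_neg ha, dif_neg hb]
      have hab : (⟨a.1, mem_eraseD_cells hc a.2 ha⟩ : {x // x ∈ (eraseD μ c).cells})
          ≠ ⟨b.1, mem_eraseD_cells hc b.2 hb⟩ := by
        intro he
        exact hne (Subtype.ext (Subtype.mk_eq_mk.mp he))
      have := hP' ⟨a.1, mem_eraseD_cells hc a.2 ha⟩ ⟨b.1, mem_eraseD_cells hc b.2 hb⟩ h1 h2 hab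
      rw [Fin.lt_def] at this
      exact this

lemma top_upT (hc : IsRem μ c)
    (T' : {x // x ∈ (eraseD μ c).cells} ≃ Fin (eraseD μ c).card) (h0 : 0 < μ.card) :
    (((upT hc T').symm ⟨μ.card - 1, Nat.sub_lt h0 Nat.one_pos⟩ : {x // x ∈ μ.cells}) : ℕ × ℕ)
      = c := by
  have hcard := card_eraseD hc
  unfold upT
  dsimp only [Equiv.coe_fn_symm_mk]
  split
  · rfl
  · next hcond =>
    refine absurd ?_ hcond
    show μ.card - 1 = (eraseD μ c).card
    omega

lemma htop_of_top (hc : IsRem μ c) (T : {x // x ∈ μ.cells} ≃ Fin μ.card) (h0 : 0 < μ.card)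
    (h : ((T.symm ⟨μ.card - 1, Nat.sub_lt h0 Nat.one_pos⟩ : {x // x ∈ μ.cells}) : ℕ × ℕ) = c) :
    (T ⟨c, hc.1⟩ : Fin μ.card).1 = (eraseD μ c).card := by
  have hcard := card_eraseD hc
  have h2 : T.symm ⟨μ.card - 1, Nat.sub_lt h0 Nat.one_pos⟩ = ⟨c, hc.1⟩ := Subtype.ext h
  have h3 := congrArg T h2
  rw [Equiv.apply_symm_apply] at h3
  rw [← h3]
  simp only
  omega

lemma top_mem_remF (h0 : 0 < μ.card) (T : {x // x ∈ μ.cells} ≃ Fin μ.card) (hP : Pcond μ T) :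
    (((T.symm ⟨μ.card - 1, Nat.sub_lt h0 Nat.one_pos⟩ : {x // x ∈ μ.cells}) : ℕ × ℕ))
      ∈ remF μ := by
  set a := T.symm ⟨μ.card - 1, Nat.sub_lt h0 Nat.one_pos⟩ with ha
  have hTa : (T a).1 = μ.card - 1 := by rw [ha, Equiv.apply_symm_apply]
  rw [mem_remF]
  refine ⟨a.2, fun hm => ?_, fun hm => ?_⟩
  · have hlt := hP a ⟨((a : ℕ × ℕ).1 + 1, (a : ℕ × ℕ).2), hm⟩ (Nat.le_succ _) le_rfl
      (by intro he
          have := congrArg (fun z : {x // x ∈ μ.cells} => (z : ℕ × ℕ).1) he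
          simp only at this
          omega)
    have hb := (T ⟨((a : ℕ × ℕ).1 + 1, (a : ℕ × ℕ).2), hm⟩).2
    rw [Fin.lt_def, hTa] at hlt
    omega
  · have hlt := hP a ⟨((a : ℕ × ℕ).1, (a : ℕ × ℕ).2 + 1), hm⟩ le_rfl (Nat.le_succ _)
      (by intro he
          have := congrArg (fun z : {x // x ∈ μ.cells} => (z : ℕ × ℕ).2) he
          simp only at this
          omega)
    have hb := (T ⟨((a : ℕ × ℕ).1, (a : ℕ × ℕ).2 + 1), hm⟩).2
    rw [Fin.lt_def, hTa] at hlt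
    omega

lemma fiber_card (h0 : 0 < μ.card) (hcm : c ∈ remF μ) :
    ((Finset.univ.filter (Pcond μ)).filter
        (fun T => (((T.symm ⟨μ.card - 1, Nat.sub_lt h0 Nat.one_pos⟩ :
          {x // x ∈ μ.cells}) : ℕ × ℕ)) = c)).card
      = fSYT (eraseD μ c) := by
  have hc := mem_remF.mp hcm
  rw [fSYT_eq]
  refine Finset.card_bij'
    (fun T hT => downT hc T (htop_of_top hc T h0 (Finset.mem_filter.mp hT).2))
    (fun T' _ => upT hc T') ?_ ?_ ?_ ?_
  · intro T hT
    rw [Finset.mem_filter]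
    refine ⟨Finset.mem_univ _, Pcond_down hc T _ ?_⟩
    exact (Finset.mem_filter.mp (Finset.mem_filter.mp hT).1).2
  · intro T' hT'
    rw [Finset.mem_filter, Finset.mem_filter]
    exact ⟨⟨Finset.mem_univ _, Pcond_up hc T' (Finset.mem_filter.mp hT').2⟩, top_upT hc T' h0⟩
  · intro T hT
    apply Equiv.ext
    intro x
    have htop := htop_of_top hc T h0 (Finset.mem_filter.mp hT).2
    unfold upT
    dsimp only [Equiv.coe_fn_mk]
    by_cases hx : x.1 = c
    · rw [dif_pos hx]
      have hxc : x = ⟨c, hc.1⟩ := Subtype.ext hx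
      rw [hxc]
      exact (Fin.ext htop.symm)
    · rw [dif_neg hx]
      exact Fin.ext rfl
  · intro T' hT'
    apply Equiv.ext
    intro x
    have hx : x.1 ≠ c := (of_mem_eraseD_cells hc x.2).2
    unfold downT upT
    dsimp only [Equiv.coe_fn_mk]
    apply Fin.ext
    simp only
    rw [dif_neg hx]

lemma fSYT_zero (h : μ.card = 0) : fSYT μ = 1 := by
  have hE : IsEmpty {x // x ∈ μ.cells} := ⟨fun x => by
    obtain ⟨v, hv⟩ := x
    rw [Finset.card_eq_zero.mp h] at hv
    exact Finset.notMem_empty v hv⟩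
  rw [fSYT_eq]
  have huniv : Finset.univ.filter (Pcond μ) = Finset.univ := by
    apply Finset.filter_true_of_mem
    intro T _ a
    exact hE.elim a
  rw [huniv, Finset.card_univ]
  have e : {x // x ∈ μ.cells} ≃ Fin μ.card :=
    Fintype.equivFinOfCardEq (Fintype.card_coe μ.cells)
  rw [Fintype.card_equiv e, Fintype.card_coe]
  have h' : μ.cells.card = 0 := h
  rw [h']
  rfl

lemma fSYT_rec (h : μ.card ≠ 0) : fSYT μ = ∑ c ∈ remF μ, fSYT (eraseD μ c) := by
  have h0 : 0 < μ.card := Nat.pos_of_ne_zero h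
  rw [fSYT_eq,
    Finset.card_eq_sum_card_fiberwise
      (f := fun T : {x // x ∈ μ.cells} ≃ Fin μ.card =>
        (((T.symm ⟨μ.card - 1, Nat.sub_lt h0 Nat.one_pos⟩ : {x // x ∈ μ.cells}) : ℕ × ℕ)))
      (t := remF μ)
      (fun T hT => top_mem_remF h0 T (Finset.mem_filter.mp hT).2)]
  exact Finset.sum_congr rfl fun c hc => fiber_card h0 hc

lemma fSYT_eq_g : ∀ (N : ℕ) (μ : YoungDiagram), μ.card = N → fSYT μ = g μ := by
  intro N
  induction N using Nat.strong_induction_on with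
  | _ N IH =>
  intro μ hN
  rcases Nat.eq_zero_or_pos μ.card with h0 | hpos
  · rw [fSYT_zero h0, g_zero h0]
  · rw [fSYT_rec (by omega), g_rec (by omega)]
    refine Finset.sum_congr rfl fun c hc => ?_
    have := card_eraseD (mem_remF.mp hc)
    exact IH (eraseD μ c).card (by omega) _ rfl

lemma fSYT_g (μ : YoungDiagram) : fSYT μ = g μ := fSYT_eq_g μ.card μ rfl

end YD
namespace YD
open Finset

variable {μ : YoungDiagram} {c : ℕ × ℕ}

lemma list_range_sum (k : ℕ) (f : ℕ → ℕ) :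
    ((List.range k).map f).sum = ∑ i ∈ Finset.range k, f i := by
  induction k with
  | zero => simp
  | succ k ih => rw [List.range_succ, Finset.sum_range_succ, List.map_append, List.sum_append, ih]
                 simp

lemma cells_eq_biUnion (μ : YoungDiagram) :
    μ.cells = (Finset.range (μ.colLen 0)).biUnion (fun i => μ.row i) := by
  ext ⟨i, j⟩
  simp only [Finset.mem_biUnion, Finset.mem_range, YoungDiagram.mem_row_iff]
  constructor
  · intro hm
    refine ⟨i, ?_, by simpa using hm, rfl⟩
    calc i < μ.colLen j := YoungDiagram.mem_iff_lt_colLen.mp (by simpa using hm)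
    _ ≤ μ.colLen 0 := μ.colLen_anti 0 j (Nat.zero_le _)
  · rintro ⟨i', _, hm, rfl⟩
    simpa using hm

lemma card_eq_sum_rowLens' (μ : YoungDiagram) :
    μ.card = ∑ i ∈ Finset.range (μ.colLen 0), μ.rowLen i := by
  rw [YoungDiagram.card, cells_eq_biUnion μ, Finset.card_biUnion]
  · exact Finset.sum_congr rfl fun i _ => (μ.rowLen_eq_card).symm
  · intro a _ b _ hab
    simp only [Finset.disjoint_left, YoungDiagram.mem_row_iff]
    rintro x ⟨_, rfl⟩ ⟨_, h⟩
    exact hab h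

lemma rowLens_sum (μ : YoungDiagram) : μ.rowLens.sum = μ.card := by
  rw [YoungDiagram.rowLens, list_range_sum, card_eq_sum_rowLens']

noncomputable def ofYD (μ : YoungDiagram) (n : ℕ) (h : μ.card = n) : n.Partition where
  parts := (μ.rowLens : Multiset ℕ)
  parts_pos := fun hi => μ.pos_of_mem_rowLens _ (by simpa using hi)
  parts_sum := by
    show (μ.rowLens).sum = n
    rw [rowLens_sum, h]

lemma ofYD_sort (μ : YoungDiagram) (n : ℕ) (h : μ.card = n) :
    (ofYD μ n h).parts.sort (· ≥ ·) = μ.rowLens := by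
  refine (fun hp h1 h2 => List.Perm.eq_of_sortedGE h1 h2 hp) ?_ ?_ ?_
  · apply Multiset.coe_eq_coe.mp
    rw [Multiset.sort_eq]
    rfl
  · exact (Multiset.pairwise_sort _ _).sortedGE
  · exact μ.rowLens_sorted

lemma toYD_ofYD (μ : YoungDiagram) {n : ℕ} {h : μ.card = n} :
    toYD (ofYD μ n h) = μ := by
  have key : ∀ (w : List ℕ) (hw : w.SortedGE), w = μ.rowLens →
      YoungDiagram.ofRowLens w hw = μ := by
    intro w hw hweq
    subst hweq
    exact YoungDiagram.ofRowLens_to_rowLens_eq_self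
  exact key _ _ (ofYD_sort μ n h)

lemma toYD_rowLens {n : ℕ} (p : n.Partition) :
    (toYD p).rowLens = p.parts.sort (· ≥ ·) := by
  apply YoungDiagram.rowLens_ofRowLens_eq_self
  intro x hx
  exact p.parts_pos (by simpa using (Multiset.mem_sort (· ≥ ·)).mp (by simpa using hx))

lemma card_toYD {n : ℕ} (p : n.Partition) : (toYD p).card = n := by
  rw [← rowLens_sum, toYD_rowLens]
  calc (p.parts.sort (· ≥ ·)).sum
      = ((p.parts.sort (· ≥ ·) : List ℕ) : Multiset ℕ).sum := (Multiset.sum_coe _).symm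
    _ = p.parts.sum := by rw [Multiset.sort_eq]
    _ = n := p.parts_sum

lemma ofYD_toYD {n : ℕ} (p : n.Partition) (h : (toYD p).card = n) :
    ofYD (toYD p) n h = p := by
  apply Nat.Partition.ext
  show ((toYD p).rowLens : Multiset ℕ) = p.parts
  rw [toYD_rowLens]
  exact Multiset.sort_eq _ _

lemma ofYD_congr {μ ν : YoungDiagram} {n : ℕ} (hμν : μ = ν) (h : μ.card = n)
    (h' : ν.card = n) : ofYD μ n h = ofYD ν n h' := by
  subst hμν; rfl

end YD

namespace YD

lemma round1 {n : ℕ} (p : Nat.Partition (n + 1)) (c : ℕ × ℕ) (hrem : IsRem (toYD p) c)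
    (h : (eraseD (toYD p) c).card = n)
    (h' : (addD (toYD (ofYD (eraseD (toYD p) c) n h)) c).card = n + 1) :
    ofYD (addD (toYD (ofYD (eraseD (toYD p) c) n h)) c) (n + 1) h' = p := by
  have heq : addD (toYD (ofYD (eraseD (toYD p) c) n h)) c = toYD p := by
    rw [toYD_ofYD]
    exact addD_eraseD hrem
  rw [ofYD_congr heq h' (card_toYD p)]
  exact ofYD_toYD p _

lemma round2 {n : ℕ} (q : Nat.Partition n) (c : ℕ × ℕ) (hadd : IsAdd (toYD q) c)
    (h : (addD (toYD q) c).card = n + 1)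
    (h' : (eraseD (toYD (ofYD (addD (toYD q) c) (n + 1) h)) c).card = n) :
    ofYD (eraseD (toYD (ofYD (addD (toYD q) c) (n + 1) h)) c) n h' = q := by
  have heq : eraseD (toYD (ofYD (addD (toYD q) c) (n + 1) h)) c = toYD q := by
    rw [toYD_ofYD]
    exact eraseD_addD hadd
  rw [ofYD_congr heq h' (card_toYD q)]
  exact ofYD_toYD q _

end YD

theorem stmt4 (n : ℕ) :
    Nat.factorial n = ∑ p : n.Partition, (fSYT (toYD p)) ^ 2 := by
  induction n with
  | zero =>
    have hall : ∀ p : Nat.Partition 0, fSYT (toYD p) ^ 2 = 1 := fun p => by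
      rw [YD.fSYT_zero (YD.card_toYD p)]
      norm_num
    rw [Finset.sum_congr rfl fun p _ => hall p, Finset.sum_const, smul_eq_mul, mul_one,
      Finset.card_univ]
    have huniq : ∀ p q : Nat.Partition 0, p = q := by
      intro p q
      apply Nat.Partition.ext
      have h1 : ∀ r : Nat.Partition 0, r.parts = 0 := by
        intro r
        rw [Multiset.eq_zero_iff_forall_notMem]
        intro x hx
        have hpos := r.parts_pos hx
        have hsum := r.parts_sum
        have hle := Multiset.single_le_sum (fun y _ => Nat.zero_le y) x hx
        omega
      rw [h1 p, h1 q]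
    rw [show Nat.factorial 0 = 1 from rfl]
    symm
    rw [Fintype.card_eq_one_iff]
    exact ⟨default, fun q => huniq q default⟩
  | succ n IH =>
    have step1 : ∀ p : Nat.Partition (n + 1), fSYT (toYD p) ^ 2
        = ∑ c ∈ YD.remF (toYD p), YD.g (toYD p) * YD.g (YD.eraseD (toYD p) c) := by
      intro p
      rw [pow_two, YD.fSYT_g, ← Finset.mul_sum, ← YD.g_rec (by rw [YD.card_toYD p]; omega)]
    rw [Finset.sum_congr rfl fun p _ => step1 p]
    have key : ∑ p : Nat.Partition (n + 1),
          ∑ c ∈ YD.remF (toYD p), YD.g (toYD p) * YD.g (YD.eraseD (toYD p) c)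
        = ∑ q : Nat.Partition n,
          ∑ c ∈ YD.addF (toYD q), YD.g (YD.addD (toYD q) c) * YD.g (toYD q) := by
      rw [Finset.sum_sigma' Finset.univ _
          (fun p c => YD.g (toYD p) * YD.g (YD.eraseD (toYD p) c)),
        Finset.sum_sigma' Finset.univ _
          (fun q c => YD.g (YD.addD (toYD q) c) * YD.g (toYD q))]
      refine Finset.sum_bij'
        (fun a ha => ⟨YD.ofYD (YD.eraseD (toYD a.1) a.2) n (by
            have h1 := YD.card_eraseD (YD.mem_remF.mp (Finset.mem_sigma.mp ha).2)
            have h2 := YD.card_toYD a.1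
            omega), a.2⟩)
        (fun a ha => ⟨YD.ofYD (YD.addD (toYD a.1) a.2) (n + 1) (by
            have h1 := YD.card_addD (YD.mem_addF.mp (Finset.mem_sigma.mp ha).2)
            have h2 := YD.card_toYD a.1
            omega), a.2⟩) ?_ ?_ ?_ ?_ ?_
      · rintro ⟨p, c⟩ ha
        have hrem := YD.mem_remF.mp (Finset.mem_sigma.mp ha).2
        rw [Finset.mem_sigma]
        refine ⟨Finset.mem_univ _, ?_⟩
        rw [YD.toYD_ofYD]
        exact YD.mem_addF.mpr (YD.isAdd_eraseD hrem)
      · rintro ⟨q, c⟩ ha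
        have hadd := YD.mem_addF.mp (Finset.mem_sigma.mp ha).2
        rw [Finset.mem_sigma]
        refine ⟨Finset.mem_univ _, ?_⟩
        rw [YD.toYD_ofYD]
        exact YD.mem_remF.mpr (YD.isRem_addD hadd)
      · rintro ⟨p, c⟩ ha
        have hrem := YD.mem_remF.mp (Finset.mem_sigma.mp ha).2
        dsimp only
        exact congrArg (fun z => (⟨z, c⟩ : Σ _ : Nat.Partition (n + 1), ℕ × ℕ))
          (YD.round1 p c hrem _ _)
      · rintro ⟨q, c⟩ ha
        have hadd := YD.mem_addF.mp (Finset.mem_sigma.mp ha).2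
        dsimp only
        exact congrArg (fun z => (⟨z, c⟩ : Σ _ : Nat.Partition n, ℕ × ℕ))
          (YD.round2 q c hadd _ _)
      · rintro ⟨p, c⟩ ha
        have hrem := YD.mem_remF.mp (Finset.mem_sigma.mp ha).2
        dsimp only
        rw [YD.toYD_ofYD, YD.addD_eraseD hrem]
    rw [key]
    have step3 : ∀ q : Nat.Partition n,
        ∑ c ∈ YD.addF (toYD q), YD.g (YD.addD (toYD q) c) * YD.g (toYD q)
          = (n + 1) * fSYT (toYD q) ^ 2 := fun q => by
      rw [← Finset.sum_mul, YD.sum_addF, YD.card_toYD, pow_two, YD.fSYT_g]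
      ring
    rw [Finset.sum_congr rfl fun q _ => step3 q, ← Finset.mul_sum, ← IH, Nat.factorial_succ]
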